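/- arXiv:1210.0399 — 3 statements merged into one kernel-verified Lean document; each statement's English description precedes it below -/
import Mathlib

section
/- If S is a commutative von Neumann regular ring, then every simple S-module is injective. -/
theorem simple_module_injective_of_vonNeumannRegular {S : Type u} [CommRing S]
    (hvnr : ∀ s : S, ∃ x : S, s = s ^ 2 * x)
    (M : Type u) [AddCommGroup M] [Module S M] (hM : IsSimpleModule S M) :
    Module.Injective S M := by
  apply Module.Baer.injective
  intro I f
  by_cases h : ∀ a : S, ∀ ha : a ∈ I, f ⟨a, ha⟩ = 0
  · exact ⟨0, fun x hx => (h x hx).symm⟩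
  · push_neg at h
    obtain ⟨a, haI, hfa⟩ := h
    obtain ⟨x, hx⟩ := hvnr a
    have hea : (x * a) * a = a := by linear_combination -hx
    have heI : x * a ∈ I := I.mul_mem_left x haI
    -- key: any c ∈ I with c * a = 0 has f c = 0
    have key : ∀ c : S, ∀ hc : c ∈ I, c * a = 0 → f ⟨c, hc⟩ = 0 := by
      intro c hc hca
      obtain ⟨y, hy⟩ := hvnr c
      -- f c = (c*y) • f c
      have h1 : f ⟨c, hc⟩ = (c * y) • f ⟨c, hc⟩ := by
        have : (⟨c, hc⟩ : I) = (c * y) • ⟨c, hc⟩ := by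
          ext; simp only [SetLike.mk_smul_mk, smul_eq_mul]; linear_combination hy
        conv_lhs => rw [this, map_smul]
      -- span of f a is ⊤
      have hspan : Submodule.span S {f ⟨a, haI⟩} = ⊤ := by
        rcases eq_bot_or_eq_top (Submodule.span S {f ⟨a, haI⟩}) with hb | ht
        · exact absurd (Submodule.span_singleton_eq_bot.mp hb) hfa
        · exact ht
      obtain ⟨s, hs⟩ := Submodule.mem_span_singleton.mp
        (hspan ▸ Submodule.mem_top : f ⟨c, hc⟩ ∈ Submodule.span S {f ⟨a, haI⟩})
      -- (c*y) • f a = f ((c*y)*a) = f 0 = 0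
      have h2 : (c * y) • f ⟨a, haI⟩ = 0 := by
        rw [← map_smul]
        have : ((c * y) • (⟨a, haI⟩ : I)) = (0 : I) := by
          ext; simp only [SetLike.mk_smul_mk, smul_eq_mul, ZeroMemClass.coe_zero]
          calc c * y * a = y * (c * a) := by ring
          _ = 0 := by rw [hca, mul_zero]
        rw [this, map_zero]
      rw [h1, ← hs, smul_comm, h2, smul_zero]
    refine ⟨LinearMap.toSpanSingleton S M (f ⟨x * a, heI⟩), fun b hb => ?_⟩
    have hcI : b - b * (x * a) ∈ I := I.sub_mem hb (I.mul_mem_left b heI)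
    have hca : (b - b * (x * a)) * a = 0 := by
      calc (b - b * (x * a)) * a = b * a - b * ((x * a) * a) := by ring
      _ = 0 := by rw [hea, sub_self]
    have h0 := key _ hcI hca
    have hsplit : (⟨b, hb⟩ : I) = ⟨b - b * (x * a), hcI⟩ + b • ⟨x * a, heI⟩ := by
      ext; simp only [AddMemClass.coe_add, SetLike.mk_smul_mk, smul_eq_mul]; ring
    rw [LinearMap.toSpanSingleton_apply, hsplit, map_add, h0, zero_add, map_smul]
end

section
/- If R is a commutative von Neumann regular ring that is not noetherian, then there exists a prime ideal p of R such that the singleton {p} is not open in Spec R. -/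
theorem exists_non_open_point_of_vonNeumannRegular_not_noetherian {R : Type*} [CommRing R]
    (hvnr : ∀ r : R, ∃ x : R, r = r ^ 2 * x) (hnoeth : ¬ IsNoetherianRing R) :
    ∃ p : PrimeSpectrum R, ¬ IsOpen ({p} : Set (PrimeSpectrum R)) := by
  by_contra h
  push_neg at h
  have hdisc : DiscreteTopology (PrimeSpectrum R) := discreteTopology_iff_isOpen_singleton.mpr h
  have hfin : Finite (PrimeSpectrum R) := finite_of_compact_of_discrete
  -- R is reduced
  have hred : IsReduced R := by
    refine ⟨fun r hr => ?_⟩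
    obtain ⟨n, hn⟩ := hr
    obtain ⟨x, hx⟩ := hvnr r
    have key : ∀ m : ℕ, r = r * (r * x) ^ m := by
      intro m
      induction m with
      | zero => simp
      | succ k ih =>
        calc r = r * (r * x) ^ k := ih
        _ = (r ^ 2 * x) * (r * x) ^ k := by rw [← hx]
        _ = r * (r * x) ^ (k + 1) := by ring
    have := key n
    rw [mul_pow, ← mul_assoc, mul_comm r (r ^ n), mul_assoc, hn] at this
    simpa using this
  -- every prime ideal is maximal
  have hmax : ∀ (I : Ideal R), I.IsPrime → I.IsMaximal := by
    intro I hI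
    refine Ideal.Quotient.maximal_of_isField I ?_
    refine ⟨?_, mul_comm, ?_⟩
    · exact exists_pair_ne _
    · intro a ha
      obtain ⟨r, rfl⟩ := Ideal.Quotient.mk_surjective a
      obtain ⟨x, hx⟩ := hvnr r
      refine ⟨Ideal.Quotient.mk I x, ?_⟩
      have hr : r ∉ I := by
        intro hr
        exact ha (Ideal.Quotient.eq_zero_iff_mem.mpr hr)
      have h0 : r * (1 - r * x) = 0 := by linear_combination hx
      have : 1 - r * x ∈ I := by
        rcases hI.mem_or_mem (h0 ▸ I.zero_mem) with h' | h'
        · exact absurd h' hr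
        · exact h'
      have : Ideal.Quotient.mk I (1 - r * x) = 0 := Ideal.Quotient.eq_zero_iff_mem.mpr this
      rw [map_sub, sub_eq_zero, map_mul] at this
      simpa using this.symm
  have hfinmax : Finite {I : Ideal R | I.IsMaximal} := by
    refine Finite.of_injective (fun I => (⟨I.1, I.2.isPrime⟩ : PrimeSpectrum R)) ?_
    intro I J hIJ
    exact Subtype.ext (congrArg PrimeSpectrum.asIdeal hIJ)
  letI : ∀ (I : {I : Ideal R | I.IsMaximal}), Field (R ⧸ I.1) :=
    fun I => have := Set.mem_setOf.mp I.2; Ideal.Quotient.field I.1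
  have hnil : nilradical R = ⨅ I : {I : Ideal R | I.IsMaximal}, I.1 := by
    ext x
    simp_rw [mem_nilradical, nilpotent_iff_mem_prime, Submodule.mem_iInf, Subtype.forall,
      Set.mem_setOf_eq]
    exact ⟨fun H I hI => H I hI.isPrime, fun H I hI => H I (hmax I hI)⟩
  have h0 : (⊥ : Ideal R) = ⨅ I : {I : Ideal R | I.IsMaximal}, I.1 := by
    rw [← hnil]
    exact (nilradical_eq_zero R).symm
  have e : R ≃+* ∀ I : {I : Ideal R | I.IsMaximal}, R ⧸ I.1 :=
    (RingEquiv.quotientBot R).symm.trans <| (Ideal.quotEquivOfEq h0).trans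
      (Ideal.quotientInfRingEquivPiQuotient _ fun I J hIJ =>
        Ideal.isCoprime_iff_sup_eq.mpr <| I.2.coprime_of_ne J.2 <| by
          rwa [Ne, Subtype.coe_inj])
  haveI hss : IsSemisimpleRing (∀ I : {I : Ideal R | I.IsMaximal}, R ⧸ I.1) := by
    set_option synthInstance.maxHeartbeats 1000000 in infer_instance
  haveI hnn : IsNoetherianRing (∀ I : {I : Ideal R | I.IsMaximal}, R ⧸ I.1) := by
    set_option synthInstance.maxHeartbeats 1000000 in infer_instance
  exact hnoeth (isNoetherianRing_of_ringEquiv _ e.symm)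
end

section
/- Let S be a commutative ring and define S^abs = S[x_s : s ∈ S] / (s^2 x_s − s, x_s^2 s − x_s : s ∈ S). Then the canonical map Spec S^abs → Spec S induced by the natural ring homomorphism S → S^abs is a bijection. -/
open MvPolynomial in
/-- The ideal of relations `s^2 * x_s - s` and `x_s^2 * s - x_s` defining the
absolutely flat approximation of a commutative ring `S`. -/
noncomputable def absRelations (S : Type u) [CommRing S] : Ideal (MvPolynomial S S) :=
  Ideal.span ({q | ∃ s : S, q = C s ^ 2 * X s - C s} ∪
    {q | ∃ s : S, q = X s ^ 2 * C s - X s})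

/-- The absolutely flat approximation `S^abs` of a commutative ring `S`. -/
def AbsApprox (S : Type u) [CommRing S] : Type u :=
  MvPolynomial S S ⧸ absRelations S

noncomputable instance (S : Type u) [CommRing S] : CommRing (AbsApprox S) :=
  Ideal.Quotient.commRing _

/-- The canonical ring homomorphism `S → S^abs`. -/
noncomputable def absUnit (S : Type u) [CommRing S] : S →+* AbsApprox S :=
  (Ideal.Quotient.mk (absRelations S)).comp MvPolynomial.C


open MvPolynomial

variable {S : Type u} [CommRing S] (P : Ideal S) [P.IsPrime]

open Classical in
/-- Evaluation into the localization at `P`, sending `x_s` to `1/s` if `s ∉ P` and to `0`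
otherwise. -/
noncomputable def absPhi : MvPolynomial S S →+* Localization.AtPrime P :=
  eval₂Hom (algebraMap S (Localization.AtPrime P))
    (fun s => if h : s ∈ P then 0 else
      IsLocalization.mk' (Localization.AtPrime P) 1 (⟨s, h⟩ : P.primeCompl))

@[simp] lemma absPhi_C (s : S) : absPhi P (C s) = algebraMap S (Localization.AtPrime P) s := by
  simp [absPhi]

lemma absPhi_X_of_mem {s : S} (hs : s ∈ P) : absPhi P (X s) = 0 := by
  rw [absPhi, eval₂Hom_X']; rw [dif_pos hs]

lemma absPhi_X_of_not_mem {s : S} (hs : s ∉ P) :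
    absPhi P (X s) = IsLocalization.mk' (Localization.AtPrime P) 1 (⟨s, hs⟩ : P.primeCompl) := by
  rw [absPhi, eval₂Hom_X']; rw [dif_neg hs]

/-- The map from the localization at `P` to the residue field at `P`. -/
noncomputable def absChi : Localization.AtPrime P →+* FractionRing (S ⧸ P) :=
  IsLocalization.lift (M := P.primeCompl)
    (g := (algebraMap (S ⧸ P) (FractionRing (S ⧸ P))).comp (Ideal.Quotient.mk P))
    (by
      rintro ⟨s, hs⟩
      simp only [RingHom.comp_apply]
      rw [isUnit_iff_ne_zero, Ne, map_eq_zero_iff _ (IsFractionRing.injective _ _),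
        Ideal.Quotient.eq_zero_iff_mem]
      exact hs)

@[simp] lemma absChi_algebraMap (s : S) :
    absChi P (algebraMap S (Localization.AtPrime P) s) =
      algebraMap (S ⧸ P) (FractionRing (S ⧸ P)) (Ideal.Quotient.mk P s) :=
  IsLocalization.lift_eq _ s

/-- The evaluation from the polynomial ring to the residue field at `P`. -/
noncomputable def absPhiK : MvPolynomial S S →+* FractionRing (S ⧸ P) :=
  (absChi P).comp (absPhi P)

@[simp] lemma absPhiK_C (s : S) :
    absPhiK P (C s) = algebraMap (S ⧸ P) (FractionRing (S ⧸ P)) (Ideal.Quotient.mk P s) := by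
  simp [absPhiK]

lemma absPhiK_C_eq_zero_iff (s : S) : absPhiK P (C s) = 0 ↔ s ∈ P := by
  rw [absPhiK_C, map_eq_zero_iff _ (IsFractionRing.injective _ _), Ideal.Quotient.eq_zero_iff_mem]

lemma mk'_one_mul (s : S) (hs : s ∉ P) :
    IsLocalization.mk' (Localization.AtPrime P) 1 (⟨s, hs⟩ : P.primeCompl) *
      algebraMap S (Localization.AtPrime P) s = 1 := by
  rw [IsLocalization.mk'_spec, map_one]

lemma absRelations_le_ker : absRelations S ≤ RingHom.ker (absPhiK P) := by
  rw [absRelations, Ideal.span_le]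
  rintro q (⟨s, rfl⟩ | ⟨s, rfl⟩) <;> by_cases hs : s ∈ P <;>
      simp only [SetLike.mem_coe, RingHom.mem_ker, absPhiK, RingHom.comp_apply]
  · rw [map_sub, map_mul, map_pow, absPhi_X_of_mem P hs, absPhi_C, mul_zero, zero_sub, map_neg,
      absChi_algebraMap, neg_eq_zero, map_eq_zero_iff _ (IsFractionRing.injective _ _),
      Ideal.Quotient.eq_zero_iff_mem]
    exact hs
  · have h := mk'_one_mul P s hs
    rw [map_sub, map_mul, map_pow, absPhi_X_of_not_mem P hs, absPhi_C,
      show algebraMap S (Localization.AtPrime P) s ^ 2 *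
          IsLocalization.mk' (Localization.AtPrime P) 1 (⟨s, hs⟩ : P.primeCompl) -
          algebraMap S (Localization.AtPrime P) s = 0 from by
        linear_combination algebraMap S (Localization.AtPrime P) s * h, map_zero]
  · rw [map_sub, map_mul, map_pow, absPhi_X_of_mem P hs]
    simp
  · have h := mk'_one_mul P s hs
    rw [map_sub, map_mul, map_pow, absPhi_X_of_not_mem P hs, absPhi_C,
      show IsLocalization.mk' (Localization.AtPrime P) 1 (⟨s, hs⟩ : P.primeCompl) ^ 2 *
          algebraMap S (Localization.AtPrime P) s -
          IsLocalization.mk' (Localization.AtPrime P) 1 (⟨s, hs⟩ : P.primeCompl) = 0 from by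
        linear_combination IsLocalization.mk' (Localization.AtPrime P) 1
          (⟨s, hs⟩ : P.primeCompl) * h, map_zero]

lemma absPhiK_surjective : Function.Surjective (absPhiK P) := by
  intro z
  obtain ⟨a, b, hb, rfl⟩ := IsFractionRing.div_surjective (A := S ⧸ P) z
  obtain ⟨a', rfl⟩ := Ideal.Quotient.mk_surjective a
  obtain ⟨b', rfl⟩ := Ideal.Quotient.mk_surjective b
  have hb' : b' ∉ P := by
    intro h
    exact (mem_nonZeroDivisors_iff_ne_zero.mp hb) (by rwa [Ideal.Quotient.eq_zero_iff_mem])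
  refine ⟨C a' * X b', ?_⟩
  have h1 : absPhiK P (X b') * absPhiK P (C b') = 1 := by
    rw [absPhiK, RingHom.comp_apply, RingHom.comp_apply, absPhi_X_of_not_mem P hb', absPhi_C,
      ← map_mul, mk'_one_mul P b' hb', map_one]
  rw [map_mul, absPhiK_C, div_eq_mul_inv]
  congr 1
  exact eq_inv_of_mul_eq_one_left (by rwa [absPhiK_C] at h1)

lemma ker_absPhiK_le {Q : Ideal (MvPolynomial S S)} [hQ : Q.IsPrime]
    (hrel : absRelations S ≤ Q)
    (hcom : Q.comap (C : S →+* MvPolynomial S S) = P) :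
    RingHom.ker (absPhiK P) ≤ Q := by
  intro f hf
  set ρ := Ideal.Quotient.mk Q with hρ
  have hCiff : ∀ s : S, C s ∈ Q ↔ s ∈ P := by
    intro s
    rw [← hcom, Ideal.mem_comap]
  have hXmem : ∀ s ∈ P, X s ∈ Q := by
    intro s hs
    have h1 : X s ^ 2 * C s - X s ∈ Q := hrel (Ideal.subset_span (Or.inr ⟨s, rfl⟩))
    have h2 : X s ^ 2 * C s ∈ Q := Q.mul_mem_left _ ((hCiff s).mpr hs)
    have h3 := Q.sub_mem h2 h1
    simpa using h3
  have hmulone : ∀ (s : S), s ∉ P → ρ (C s) * ρ (X s) = 1 := by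
    intro s hs
    have h1 : C (σ := S) s ^ 2 * X s - C s ∈ Q :=
      hrel (Ideal.subset_span (Or.inl ⟨s, rfl⟩))
    have h2 : C s * (C s * X s - 1) ∈ Q := by
      have he : C (σ := S) s * (C s * X s - 1) = C s ^ 2 * X s - C s := by ring
      rwa [he]
    have h3 : C (σ := S) s * X s - 1 ∈ Q :=
      (hQ.mem_or_mem h2).resolve_left (fun h => hs ((hCiff s).mp h))
    have h4 : ρ (C s * X s - 1) = 0 := Ideal.Quotient.eq_zero_iff_mem.mpr h3
    rw [map_sub, map_mul, map_one, sub_eq_zero] at h4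
    exact h4
  have hunit : ∀ s : P.primeCompl, IsUnit ((ρ.comp (C : S →+* MvPolynomial S S)) s) := by
    rintro ⟨s, hs⟩
    exact IsUnit.of_mul_eq_one (ρ (X s)) (hmulone s hs)
  set h : Localization.AtPrime P →+* MvPolynomial S S ⧸ Q :=
    IsLocalization.lift (M := P.primeCompl) hunit with hh
  have hliftC : ∀ s : S, h (algebraMap S (Localization.AtPrime P) s) = ρ (C s) := by
    intro s
    exact IsLocalization.lift_eq hunit s
  have hfact : h.comp (absPhi P) = ρ := by
    apply MvPolynomial.ringHom_ext
    · intro s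
      rw [RingHom.comp_apply, absPhi_C]
      exact hliftC s
    · intro s
      by_cases hs : s ∈ P
      · rw [RingHom.comp_apply, absPhi_X_of_mem P hs, map_zero,
          eq_comm, Ideal.Quotient.eq_zero_iff_mem]
        exact hXmem s hs
      · rw [RingHom.comp_apply, absPhi_X_of_not_mem P hs]
        have ha : h (IsLocalization.mk' (Localization.AtPrime P) 1
            (⟨s, hs⟩ : P.primeCompl)) * ρ (C s) = 1 := by
          rw [← hliftC s, ← map_mul, mk'_one_mul P s hs, map_one]
        calc h (IsLocalization.mk' (Localization.AtPrime P) 1 (⟨s, hs⟩ : P.primeCompl))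
            = h (IsLocalization.mk' (Localization.AtPrime P) 1 (⟨s, hs⟩ : P.primeCompl)) *
              (ρ (C s) * ρ (X s)) := by rw [hmulone s hs, mul_one]
          _ = ρ (X s) * (h (IsLocalization.mk' (Localization.AtPrime P) 1
              (⟨s, hs⟩ : P.primeCompl)) * ρ (C s)) := by ring
          _ = ρ (X s) := by rw [ha, mul_one]
  have hker_chi : absPhi P f ∈ RingHom.ker (absChi P) := hf
  have hmax : absPhi P f ∈ IsLocalRing.maximalIdeal (Localization.AtPrime P) :=
    IsLocalRing.le_maximalIdeal (RingHom.ker_ne_top _) hker_chi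
  have hmapP : Ideal.map (algebraMap S (Localization.AtPrime P)) P ≤ RingHom.ker h := by
    rw [Ideal.map_le_iff_le_comap]
    intro p hp
    rw [Ideal.mem_comap, RingHom.mem_ker, hliftC p, Ideal.Quotient.eq_zero_iff_mem]
    exact (hCiff p).mpr hp
  have hzero : h (absPhi P f) = 0 := by
    have := hmapP (by rwa [Localization.AtPrime.map_eq_maximalIdeal])
    exact this
  rw [← Ideal.Quotient.eq_zero_iff_mem, ← hρ, ← hfact]
  exact hzero

theorem absApprox_spec_bijective_aux (S : Type u) [CommRing S] :
    Function.Bijective (PrimeSpectrum.comap (absUnit S)) := by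
  have comap_eq : ∀ P : PrimeSpectrum (AbsApprox S),
      (P.asIdeal.comap (Ideal.Quotient.mk (absRelations S))).comap
        (C : S →+* MvPolynomial S S) =
      (PrimeSpectrum.comap (absUnit S) P).asIdeal := by
    intro P
    ext x
    rfl
  have rel_le : ∀ P : PrimeSpectrum (AbsApprox S),
      absRelations S ≤ P.asIdeal.comap (Ideal.Quotient.mk (absRelations S)) := by
    intro P x hx
    have h0 : (Ideal.Quotient.mk (absRelations S)) x = 0 := Ideal.Quotient.eq_zero_iff_mem.mpr hx
    show Ideal.Quotient.mk (absRelations S) x ∈ P.asIdeal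
    rw [h0]
    exact zero_mem _
  constructor
  · intro P1 P2 hP
    set p := (PrimeSpectrum.comap (absUnit S) P1).asIdeal with hpdef
    haveI : p.IsPrime := (PrimeSpectrum.comap (absUnit S) P1).isPrime
    have h1 : (P1.asIdeal.comap (Ideal.Quotient.mk (absRelations S))).comap
        (C : S →+* MvPolynomial S S) = p := comap_eq P1
    have h2 : (P2.asIdeal.comap (Ideal.Quotient.mk (absRelations S))).comap
        (C : S →+* MvPolynomial S S) = p := by
      rw [comap_eq P2, ← hP]
    have hmax : (RingHom.ker (absPhiK p)).IsMaximal :=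
      RingHom.ker_isMaximal_of_surjective _ (absPhiK_surjective p)
    haveI : (P1.asIdeal.comap (Ideal.Quotient.mk (absRelations S))).IsPrime :=
      Ideal.comap_isPrime (Ideal.Quotient.mk (absRelations S)) P1.asIdeal (H := P1.isPrime)
    haveI : (P2.asIdeal.comap (Ideal.Quotient.mk (absRelations S))).IsPrime :=
      Ideal.comap_isPrime (Ideal.Quotient.mk (absRelations S)) P2.asIdeal (H := P2.isPrime)
    have e1 : RingHom.ker (absPhiK p) =
        P1.asIdeal.comap (Ideal.Quotient.mk (absRelations S)) :=
      hmax.eq_of_le (Ideal.IsPrime.ne_top inferInstance) (ker_absPhiK_le p (rel_le P1) h1)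
    have e2 : RingHom.ker (absPhiK p) =
        P2.asIdeal.comap (Ideal.Quotient.mk (absRelations S)) :=
      hmax.eq_of_le (Ideal.IsPrime.ne_top inferInstance) (ker_absPhiK_le p (rel_le P2) h2)
    have : P1.asIdeal = P2.asIdeal :=
      Ideal.comap_injective_of_surjective _ Ideal.Quotient.mk_surjective (e1 ▸ e2)
    exact PrimeSpectrum.ext this
  · intro P
    set p := P.asIdeal with hpdef
    haveI : p.IsPrime := P.isPrime
    set ψ : AbsApprox S →+* FractionRing (S ⧸ p) :=
      Ideal.Quotient.lift (absRelations S) (absPhiK p)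
        (fun a ha => absRelations_le_ker p ha) with hψ
    haveI : (RingHom.ker ψ).IsPrime := RingHom.ker_isPrime ψ
    refine ⟨⟨RingHom.ker ψ, inferInstance⟩, ?_⟩
    apply PrimeSpectrum.ext
    rw [PrimeSpectrum.comap_asIdeal]
    ext s
    rw [Ideal.mem_comap, RingHom.mem_ker]
    have e : ψ (absUnit S s) = absPhiK p (C s) := rfl
    rw [e, absPhiK_C_eq_zero_iff]

theorem absApprox_spec_bijective (S : Type u) [CommRing S] :
    Function.Bijective (PrimeSpectrum.comap (absUnit S)) :=
  absApprox_spec_bijective_aux S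
end
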